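/- arXiv:1107.4819 — 3 statements merged into one kernel-verified Lean document; each statement's English description precedes it below -/
import Mathlib

section
/- Let S be an orthodox semigroup, a a nongroup element of S, and b an inverse of a. Then either A = ⟨a,b⟩ has top D-class {a, b, ab, ba} (i.e., A \ {a,b,ab,ba} is an ideal of A and {a,b,ab,ba} is a D-class of A), or (possibly after interchanging a and b) ab = a²b² and ba ≠ b²a². -/
set_option linter.unusedSectionVars false
set_option maxHeartbeats 1000000


namespace PaperStmt

/-- `S` is a regular semigroup. -/
def RegularSgp (S : Type*) [Semigroup S] : Prop := ∀ x : S, ∃ y, x * y * x = x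

/-- The idempotents of `S` form a subsemigroup. -/
def IdemClosed (S : Type*) [Semigroup S] : Prop :=
  ∀ e f : S, e * e = e → f * f = f → (e * f) * (e * f) = e * f

/-- An orthodox semigroup: regular with idempotents closed under multiplication. -/
def Orthodox (S : Type*) [Semigroup S] : Prop := RegularSgp S ∧ IdemClosed S

/-- Green's R-relation in a monoid. -/
def GreenRM {M : Type*} [Monoid M] (x y : M) : Prop :=
  (∃ s, x = y * s) ∧ (∃ s, y = x * s)

/-- Green's L-relation in a monoid. -/
def GreenLM {M : Type*} [Monoid M] (x y : M) : Prop :=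
  (∃ s, x = s * y) ∧ (∃ s, y = s * x)

/-- Green's R-relation on a semigroup, computed in S¹ = WithOne S. -/
def GreenR {S : Type*} [Semigroup S] (x y : S) : Prop :=
  GreenRM (x : WithOne S) (y : WithOne S)

/-- Green's L-relation on a semigroup. -/
def GreenL {S : Type*} [Semigroup S] (x y : S) : Prop :=
  GreenLM (x : WithOne S) (y : WithOne S)

/-- Green's H-relation. -/
def GreenH {S : Type*} [Semigroup S] (x y : S) : Prop := GreenR x y ∧ GreenL x y

/-- Green's D-relation, D = L ∘ R. -/
def GreenD {S : Type*} [Semigroup S] (x y : S) : Prop :=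
  ∃ z : S, GreenL x z ∧ GreenR z y

/-- `a` belongs to some subgroup of `S`. -/
def InSubgroup {S : Type*} [Semigroup S] (a : S) : Prop :=
  ∃ G : Set S, a ∈ G ∧ (∀ x ∈ G, ∀ y ∈ G, x * y ∈ G) ∧
    ∃ e ∈ G, (∀ x ∈ G, e * x = x ∧ x * e = x) ∧ ∀ x ∈ G, ∃ y ∈ G, x * y = e ∧ y * x = e

/-- The H-class of `a` is a group with identity element `e`. -/
def HClassGroupWithId {S : Type*} [Semigroup S] (a e : S) : Prop :=
  GreenH e a ∧ e * e = e ∧ (∀ x, GreenH x a → e * x = x ∧ x * e = x) ∧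
    ∀ x, GreenH x a → ∃ y, GreenH y a ∧ x * y = e ∧ y * x = e

section Words
variable {S : Type*} [Semigroup S]

def ev1 (a b : S) (c : Bool) : S := cond c a b

def evW (a b : S) : List Bool → S
  | [] => a
  | [c] => ev1 a b c
  | c :: d :: r => ev1 a b c * evW a b (d :: r)

def dbl : List Bool → Prop
  | c :: d :: r => c = d ∨ dbl (d :: r)
  | _ => False

def Tset (a b : S) : Set S := {a, b, a * b, b * a}

variable (a b : S)

@[simp] lemma ev1_true : ev1 a b true = a := rfl
@[simp] lemma ev1_false : ev1 a b false = b := rfl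
@[simp] lemma evW_single (c : Bool) : evW a b [c] = ev1 a b c := rfl

lemma evW_cons (c : Bool) (l : List Bool) (hl : l ≠ []) :
    evW a b (c :: l) = ev1 a b c * evW a b l := by
  cases l with
  | nil => exact absurd rfl hl
  | cons d r => rfl

lemma evW_append (l m : List Bool) (hl : l ≠ []) (hm : m ≠ []) :
    evW a b (l ++ m) = evW a b l * evW a b m := by
  induction l with
  | nil => exact absurd rfl hl
  | cons c r ih =>
    cases r with
    | nil =>
      simp only [List.cons_append, List.nil_append]
      rw [evW_cons a b c m hm, evW_single]
    | cons d r' =>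
      have h1 : evW a b ((c :: d :: r') ++ m) = ev1 a b c * evW a b ((d :: r') ++ m) := by
        rw [List.cons_append, evW_cons]
        simp
      rw [h1, ih (by simp)]
      show _ = (ev1 a b c * evW a b (d :: r')) * evW a b m
      rw [mul_assoc]

lemma evW_swap : ∀ (c : Bool) (l : List Bool),
    evW b a (c :: l) = evW a b ((c :: l).map not) := by
  intro c l
  induction l generalizing c with
  | nil => cases c <;> rfl
  | cons d r ih =>
    rw [evW_cons b a c (d :: r) (by simp), ih d]
    simp only [List.map_cons]
    rw [evW_cons a b (!c) ((!d) :: r.map not) (by simp)]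
    have h : ev1 b a c = ev1 a b (!c) := by cases c <;> rfl
    rw [h]

lemma dbl_swap : ∀ w : List Bool, dbl w → dbl (w.map not) := by
  intro w
  induction w with
  | nil => exact id
  | cons c l ih =>
    cases l with
    | nil => exact fun h => absurd h (by simp [dbl])
    | cons d r =>
      rintro (h | h)
      · exact Or.inl (by rw [h])
      · exact Or.inr (ih h)

lemma dbl_shape {w : List Bool} (h : dbl w) : ∃ c l, w = c :: l ∧ l ≠ [] := by
  cases w with
  | nil => exact absurd h (by simp [dbl])
  | cons c l =>
    cases l with
    | nil => exact absurd h (by simp [dbl])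
    | cons d r => exact ⟨c, d :: r, rfl, by simp⟩

lemma dbl_append_left {l : List Bool} (m : List Bool) (h : dbl l) : dbl (l ++ m) := by
  induction l with
  | nil => exact absurd h (by simp [dbl])
  | cons c r ih =>
    cases r with
    | nil => exact absurd h (by simp [dbl])
    | cons d r' =>
      rcases h with h | h
      · exact Or.inl h
      · exact Or.inr (ih h)

lemma dbl_cons_of_dbl (c : Bool) {l : List Bool} (h : dbl l) : dbl (c :: l) := by
  rcases dbl_shape h with ⟨d, r, rfl, _⟩
  exact Or.inr h

lemma dbl_append_right (l : List Bool) {m : List Bool} (h : dbl m) : dbl (l ++ m) := by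
  induction l with
  | nil => simpa using h
  | cons c r ih => exact dbl_cons_of_dbl c ih

lemma dblA {c y : Bool} {r : List Bool} (h : dbl (c :: y :: r)) (hne : c ≠ y) :
    dbl (y :: r) := by
  rcases h with h | h
  · exact absurd h hne
  · exact h

lemma dblB : ∀ (L : List Bool) (x d : Bool), dbl (L ++ [x, d]) → x ≠ d → dbl (L ++ [x])
  | [], x, d, h, hne => by
    rcases h with h | h
    · exact absurd h hne
    · exact absurd h (by simp [dbl])
  | [z], x, d, h, hne => by
    rcases h with h | h
    · exact Or.inl h
    · rcases h with h | h
      · exact absurd h hne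
      · exact absurd h (by simp [dbl])
  | z :: z' :: r, x, d, h, hne => by
    simp only [List.cons_append] at h ⊢
    rcases h with h | h
    · exact Or.inl h
    · exact Or.inr (dblB (z' :: r) x d h hne)

end Words

section Absorb
variable {S : Type*} [Semigroup S] {a b : S}
variable (hab : a * b * a = a) (hba : b * a * b = b)

include hba in
lemma fabs (m : List Bool) : (b * a) * evW a b (false :: m) = evW a b (false :: m) := by
  cases m with
  | nil => show (b * a) * b = b; exact hba
  | cons x r =>
    rw [evW_cons a b false (x :: r) (by simp), ev1_false, ← mul_assoc, hba]

include hab in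
lemma eabs (m : List Bool) : (a * b) * evW a b (true :: m) = evW a b (true :: m) := by
  cases m with
  | nil => show (a * b) * a = a; exact hab
  | cons x r =>
    rw [evW_cons a b true (x :: r) (by simp), ev1_true, ← mul_assoc, hab]

include hab in
lemma absf (m : List Bool) : evW a b (m ++ [true]) * (b * a) = evW a b (m ++ [true]) := by
  cases m with
  | nil => show a * (b * a) = a; rw [← mul_assoc]; exact hab
  | cons x r =>
    rw [evW_append a b (x :: r) [true] (by simp) (by simp), evW_single, ev1_true,
      mul_assoc]
    rw [show a * (b * a) = a by rw [← mul_assoc]; exact hab]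

include hba in
lemma abse (m : List Bool) : evW a b (m ++ [false]) * (a * b) = evW a b (m ++ [false]) := by
  cases m with
  | nil => show b * (a * b) = b; rw [← mul_assoc]; exact hba
  | cons x r =>
    rw [evW_append a b (x :: r) [false] (by simp) (by simp), evW_single, ev1_false,
      mul_assoc]
    rw [show b * (a * b) = b by rw [← mul_assoc]; exact hba]

end Absorb

section Alg
variable {S : Type*} [Semigroup S] {a b : S}
variable (hab : a * b * a = a) (hba : b * a * b = b)

include hab in
lemma hab' : a * (b * a) = a := by rw [← mul_assoc]; exact hab
include hba in
lemma hba' : b * (a * b) = b := by rw [← mul_assoc]; exact hba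
include hab in
lemma habX (X : S) : a * (b * (a * X)) = a * X := by
  rw [← mul_assoc, ← mul_assoc, hab]
include hba in
lemma hbaX (X : S) : b * (a * (b * X)) = b * X := by
  rw [← mul_assoc, ← mul_assoc, hba]
include hab hba in
lemma idem_e : (a * b) * (a * b) = a * b := by
  rw [mul_assoc]; exact congrArg (a * ·) (hba' hba)
include hab hba in
lemma idem_f : (b * a) * (b * a) = b * a := by
  rw [mul_assoc]; exact congrArg (b * ·) (hab' hab)

variable (hic : IdemClosed S)

include hab hba hic in
lemma hA2B2 : a * (a * (b * (b * (a * a)))) = a * a := by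
  have hfe : ((b * a) * (a * b)) * ((b * a) * (a * b)) = (b * a) * (a * b) :=
    hic _ _ (idem_f hab hba) (idem_e hab hba)
  have h1 : b * (a * (a * (b * (b * (a * (a * (b * a))))))) = b * (a * (a * (b * a))) := by
    have := congrArg (· * a) hfe
    simpa only [mul_assoc] using this
  rw [hab' hab] at h1
  calc a * (a * (b * (b * (a * a))))
      = a * (b * (a * (a * (b * (b * (a * a)))))) := (habX hab _).symm
    _ = a * (b * (a * a)) := congrArg (a * ·) h1
    _ = a * a := habX hab a

include hab hba hic in
lemma hA2B2X (X : S) : a * (a * (b * (b * (a * (a * X))))) = a * (a * X) := by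
  have := congrArg (· * X) (hA2B2 hab hba hic)
  simpa only [mul_assoc] using this

variable (h1 : a * b ≠ a * a * (b * b)) (h2 : b * a ≠ b * b * (a * a))

include hab hba hic h1 in
/-- `a ∈ a²S¹` is impossible. -/
lemma K1a (v : S) (hv : a = a * (a * v)) : False := by
  have X1 : a * (a * (b * (b * a))) = a := by
    calc a * (a * (b * (b * a)))
        = a * (a * (b * (b * (a * (a * v))))) := congrArg (fun z => a*(a*(b*(b*z)))) hv
      _ = a * (a * v) := hA2B2X hab hba hic v
      _ = a := hv.symm
  have X2 : a * (a * (b * (b * (a * b)))) = a * b := by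
    have := congrArg (· * b) X1
    simpa only [mul_assoc] using this
  rw [hba' hba] at X2
  exact h1 (by rw [mul_assoc]; exact X2.symm)

include hab hba hic h2 in
/-- `a ∈ S¹a²` is impossible. -/
lemma K1b (v : S) (hv : a = v * (a * a)) : False := by
  have X1 : a * (b * (b * (a * a))) = a := by
    calc a * (b * (b * (a * a)))
        = (v * (a * a)) * (b * (b * (a * a))) := congrArg (· * (b * (b * (a * a)))) hv
      _ = v * (a * (a * (b * (b * (a * a))))) := by simp only [mul_assoc]
      _ = v * (a * a) := congrArg (v * ·) (hA2B2 hab hba hic)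
      _ = a := hv.symm
  have X2 : b * (a * (b * (b * (a * a)))) = b * a := congrArg (b * ·) X1
  rw [hbaX hba] at X2
  exact h2 (by rw [mul_assoc]; exact X2.symm)

include hab hba h1 in
/-- `a ∈ S¹b` is impossible. -/
lemma L1 (s : S) (hs : a = s * b) : False := by
  have h' : a * (a * b) = a := by
    calc a * (a * b) = (s * b) * (a * b) := congrArg (· * (a * b)) hs
      _ = s * (b * (a * b)) := by rw [mul_assoc]
      _ = s * b := congrArg (s * ·) (hba' hba)
      _ = a := hs.symm
  have X2 : a * (a * (b * b)) = a * b := by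
    have := congrArg (· * b) h'
    simpa only [mul_assoc] using this
  exact h1 (by rw [mul_assoc]; exact X2.symm)

include hab hba h2 in
/-- `a ∈ bS` is impossible. -/
lemma L2 (s : S) (hs : a = b * s) : False := by
  have h' : b * (a * a) = a := by
    calc b * (a * a) = b * (a * (b * s)) := congrArg (fun z => b * (a * z)) hs
      _ = b * s := hbaX hba s
      _ = a := hs.symm
  have X2 : b * (b * (a * a)) = b * a := congrArg (b * ·) h'
  exact h2 (by rw [mul_assoc]; exact X2.symm)

include hab hba hic h2 in
lemma K2a (v : S) (hv : b = b * (b * v)) : False :=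
  K1a hba hab (fun e f he hf => hic e f he hf) h2 v hv

include hab hba hic h1 in
lemma K2b (v : S) (hv : b = v * (b * b)) : False :=
  K1b hba hab (fun e f he hf => hic e f he hf) h1 v hv

include hab hba h2 in
/-- `b ∈ S¹a` is impossible. -/
lemma L4 (s : S) (hs : b = s * a) : False := L1 hba hab h2 s hs

include hab hba h1 in
/-- `b ∈ aS` is impossible. -/
lemma L3 (s : S) (hs : b = a * s) : False := L2 hba hab h1 s hs

end Alg

section ML
variable {S : Type*} [Semigroup S] {a b : S}
variable (hab : a * b * a = a) (hba : b * a * b = b) (hic : IdemClosed S)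
variable (h1 : a * b ≠ a * a * (b * b)) (h2 : b * a ≠ b * b * (a * a))

include hab hba hic h1 h2 in
lemma MLa (n : ℕ)
    (IH : ∀ m : List Bool, m.length ≤ n → dbl m → evW a b m ∉ Tset a b)
    (c d : Bool) (mid : List Bool) (hlen : mid.length ≤ n)
    (hd : dbl (c :: (mid ++ [d])))
    (hv : evW a b (c :: (mid ++ [d])) = a) : False := by
  cases c with
  | false =>
    have he : evW a b (false :: (mid ++ [d])) = b * evW a b (mid ++ [d]) := by
      rw [evW_cons a b false _ (by simp), ev1_false]
    exact L2 hab hba h2 _ (hv.symm.trans he)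
  | true =>
    cases d with
    | false =>
      have he : evW a b (true :: (mid ++ [false])) = evW a b (true :: mid) * b := by
        rw [show (true :: (mid ++ [false])) = (true :: mid) ++ [false] by simp,
          evW_append a b (true :: mid) [false] (by simp) (by simp), evW_single, ev1_false]
      exact L1 hab hba h1 _ (hv.symm.trans he)
    | true =>
      cases mid with
      | nil =>
        have he : evW a b (true :: (([] : List Bool) ++ [true])) = a * a := rfl
        have haa : a = a * a := hv.symm.trans he
        exact K1a hab hba hic h1 a
          (by calc a = a * a := haa
                _ = a * (a * a) := congrArg (a * ·) haa)
      | cons mf mr =>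
        cases mf with
        | true =>
          have he : evW a b (true :: ((true :: mr) ++ [true]))
              = a * (a * evW a b (mr ++ [true])) := by
            rw [show ((true :: mr) ++ [true]) = true :: (mr ++ [true]) by simp]
            rw [evW_cons a b true (true :: (mr ++ [true])) (by simp),
              evW_cons a b true (mr ++ [true]) (by simp), ev1_true]
          exact K1a hab hba hic h1 _ (hv.symm.trans he)
        | false =>
          rcases (false :: mr).eq_nil_or_concat' with h0 | ⟨mid', ml, hmid⟩
          · simp at h0
          · cases ml with
            | true =>
              have he : evW a b (true :: ((false :: mr) ++ [true]))
                  = evW a b (true :: mid') * (a * a) := by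
                rw [hmid]
                rw [show (true :: ((mid' ++ [true]) ++ [true]))
                    = (true :: mid') ++ [true, true] by simp]
                rw [evW_append a b (true :: mid') [true, true] (by simp) (by simp)]
                rfl
              exact K1b hab hba hic h2 _ (hv.symm.trans he)
            | false =>
              have hexp : evW a b (true :: ((false :: mr) ++ [true]))
                  = a * (evW a b (false :: mr) * a) := by
                rw [evW_cons a b true _ (by simp), ev1_true,
                  evW_append a b (false :: mr) [true] (by simp) (by simp), evW_single,
                  ev1_true]
              have hval : a * (evW a b (false :: mr) * a) = a := by rw [← hexp]; exact hv
              have k3 : (b * a) * (evW a b (false :: mr) * (a * b))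
                  = evW a b (false :: mr) := by
                rw [← mul_assoc, fabs hba mr, hmid]
                exact abse hba mid'
              have k4 : (b * a) * (evW a b (false :: mr) * (a * b)) = b := by
                calc (b * a) * (evW a b (false :: mr) * (a * b))
                    = b * ((a * (evW a b (false :: mr) * a)) * b) := by
                      simp only [mul_assoc]
                  _ = b * (a * b) := by rw [hval]
                  _ = b := hba' hba
              have hub : evW a b (false :: mr) = b := by rw [← k3, k4]
              have hd1 : dbl ((false :: mr) ++ [true]) :=
                dblA (c := true) (by simpa using hd) (by simp)
              have hd2 : dbl (mid' ++ [false, true]) := by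
                rw [hmid] at hd1; simpa using hd1
              have hd3 : dbl (false :: mr) := by
                rw [hmid]; exact dblB mid' false true hd2 (by simp)
              exact (IH (false :: mr) hlen hd3) (by rw [hub]; simp [Tset])

include hab hba hic h1 h2 in
lemma MLe (n : ℕ)
    (IH : ∀ m : List Bool, m.length ≤ n → dbl m → evW a b m ∉ Tset a b)
    (c d : Bool) (mid : List Bool) (hlen : mid.length ≤ n)
    (hd : dbl (c :: (mid ++ [d])))
    (hv : evW a b (c :: (mid ++ [d])) = a * b) : False := by
  cases c with
  | false =>
    have he : evW a b (false :: (mid ++ [d])) = b * evW a b (mid ++ [d]) := by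
      rw [evW_cons a b false _ (by simp), ev1_false]
    have key : a = b * (evW a b (mid ++ [d]) * a) := by
      calc a = (a * b) * a := hab.symm
        _ = evW a b (false :: (mid ++ [d])) * a := by rw [hv]
        _ = (b * evW a b (mid ++ [d])) * a := by rw [he]
        _ = b * (evW a b (mid ++ [d]) * a) := mul_assoc _ _ _
    exact L2 hab hba h2 _ key
  | true =>
    cases d with
    | true =>
      have he : evW a b (true :: (mid ++ [true])) = evW a b (true :: mid) * a := by
        rw [show (true :: (mid ++ [true])) = (true :: mid) ++ [true] by simp,
          evW_append a b (true :: mid) [true] (by simp) (by simp), evW_single, ev1_true]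
      have key : b = (b * evW a b (true :: mid)) * a := by
        calc b = b * (a * b) := (hba' hba).symm
          _ = b * evW a b (true :: (mid ++ [true])) := by rw [hv]
          _ = b * (evW a b (true :: mid) * a) := by rw [he]
          _ = (b * evW a b (true :: mid)) * a := (mul_assoc _ _ _).symm
      exact L4 hab hba h2 _ key
    | false =>
      cases mid with
      | nil => simp [dbl] at hd
      | cons mf mr =>
        cases mf with
        | true =>
          have he : evW a b (true :: ((true :: mr) ++ [false]))
              = a * (a * evW a b (mr ++ [false])) := by
            rw [show ((true :: mr) ++ [false]) = true :: (mr ++ [false]) by simp]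
            rw [evW_cons a b true (true :: (mr ++ [false])) (by simp),
              evW_cons a b true (mr ++ [false]) (by simp), ev1_true]
          have key : a = a * (a * (evW a b (mr ++ [false]) * a)) := by
            calc a = (a * b) * a := hab.symm
              _ = evW a b (true :: ((true :: mr) ++ [false])) * a := by rw [hv]
              _ = (a * (a * evW a b (mr ++ [false]))) * a := by rw [he]
              _ = a * (a * (evW a b (mr ++ [false]) * a)) := by simp only [mul_assoc]
          exact K1a hab hba hic h1 _ key
        | false =>
          rcases (false :: mr).eq_nil_or_concat' with h0 | ⟨mid', ml, hmid⟩
          · simp at h0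
          · cases ml with
            | false =>
              have he : evW a b (true :: ((false :: mr) ++ [false]))
                  = evW a b (true :: mid') * (b * b) := by
                rw [hmid]
                rw [show (true :: ((mid' ++ [false]) ++ [false]))
                    = (true :: mid') ++ [false, false] by simp]
                rw [evW_append a b (true :: mid') [false, false] (by simp) (by simp)]
                rfl
              have key : b = (b * evW a b (true :: mid')) * (b * b) := by
                calc b = b * (a * b) := (hba' hba).symm
                  _ = b * evW a b (true :: ((false :: mr) ++ [false])) := by rw [hv]
                  _ = b * (evW a b (true :: mid') * (b * b)) := by rw [he]
                  _ = (b * evW a b (true :: mid')) * (b * b) := (mul_assoc _ _ _).symm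
              exact K2b hab hba hic h1 _ key
            | true =>
              have hexp : evW a b (true :: ((false :: mr) ++ [false]))
                  = a * (evW a b (false :: mr) * b) := by
                rw [evW_cons a b true _ (by simp), ev1_true,
                  evW_append a b (false :: mr) [false] (by simp) (by simp), evW_single,
                  ev1_false]
              have hval : a * (evW a b (false :: mr) * b) = a * b := by
                rw [← hexp]; exact hv
              have k3 : (b * a) * (evW a b (false :: mr) * (b * a))
                  = evW a b (false :: mr) := by
                rw [← mul_assoc, fabs hba mr, hmid]
                exact absf hab mid'
              have k4 : (b * a) * (evW a b (false :: mr) * (b * a)) = b * a := by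
                calc (b * a) * (evW a b (false :: mr) * (b * a))
                    = b * ((a * (evW a b (false :: mr) * b)) * a) := by
                      simp only [mul_assoc]
                  _ = b * ((a * b) * a) := by rw [hval]
                  _ = b * a := congrArg (b * ·) hab
              have hub : evW a b (false :: mr) = b * a := by rw [← k3, k4]
              have hd1 : dbl ((false :: mr) ++ [false]) :=
                dblA (c := true) (by simpa using hd) (by simp)
              have hd2 : dbl (mid' ++ [true, false]) := by
                rw [hmid] at hd1; simpa using hd1
              have hd3 : dbl (false :: mr) := by
                rw [hmid]; exact dblB mid' true false hd2 (by simp)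
              exact (IH (false :: mr) hlen hd3) (by rw [hub]; simp [Tset])

lemma Tset_swap : Tset b a = Tset a b := by
  ext x; simp only [Tset, Set.mem_insert_iff, Set.mem_singleton_iff]; tauto

include hab hba hic h1 h2 in
lemma ML : ∀ (n : ℕ) (w : List Bool), w.length ≤ n → dbl w → evW a b w ∉ Tset a b := by
  intro n
  induction n with
  | zero =>
    intro w hlen hd
    rcases dbl_shape hd with ⟨c, l, rfl, hl⟩
    simp at hlen
  | succ n IH =>
    intro w hlen hd hmem
    rcases dbl_shape hd with ⟨c, l, rfl, hl⟩
    rcases l.eq_nil_or_concat' with rfl | ⟨mid, d, rfl⟩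
    · exact hl rfl
    · have hlen' : mid.length ≤ n := by
        simp only [List.length_cons, List.length_append, List.length_singleton] at hlen
        omega
      have IH' : ∀ m : List Bool, m.length ≤ n → dbl m → evW b a m ∉ Tset b a := by
        intro m hm hdm hmem'
        rcases dbl_shape hdm with ⟨c₀, l₀, rfl, hl₀⟩
        rw [evW_swap a b c₀ l₀, Tset_swap] at hmem'
        exact IH ((c₀ :: l₀).map not) (by simpa using hm) (dbl_swap _ hdm) hmem'
      simp only [Tset, Set.mem_insert_iff, Set.mem_singleton_iff] at hmem
      rcases hmem with hv | hv | hv | hv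
      · exact MLa hab hba hic h1 h2 n IH c d mid hlen' hd hv
      · -- value b : use swapped MLa
        apply MLa hba hab (fun e f he hf => hic e f he hf) h2 h1 n IH'
          (!c) (!d) (mid.map not) (by simpa using hlen')
        · have := dbl_swap _ hd
          simpa using this
        · rw [evW_swap a b (!c) (mid.map not ++ [!d])]
          rw [show (((!c) :: (mid.map not ++ [!d])).map not) = c :: (mid ++ [d]) by
            simp [Function.comp_def, Bool.not_not]]
          exact hv
      · exact MLe hab hba hic h1 h2 n IH c d mid hlen' hd hv
      · apply MLe hba hab (fun e f he hf => hic e f he hf) h2 h1 n IH'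
          (!c) (!d) (mid.map not) (by simpa using hlen')
        · have := dbl_swap _ hd
          simpa using this
        · rw [evW_swap a b (!c) (mid.map not ++ [!d])]
          rw [show (((!c) :: (mid.map not ++ [!d])).map not) = c :: (mid ++ [d]) by
            simp [Function.comp_def, Bool.not_not]]
          exact hv
end ML

section Assemble
variable {S : Type*} [Semigroup S] {a b : S}
variable (hab : a * b * a = a) (hba : b * a * b = b)

include hab hba in
lemma alt_val : ∀ (l : List Bool) (c : Bool), ¬ dbl (c :: l) →
    evW a b (c :: l) = ev1 a b c ∨ evW a b (c :: l) = ev1 a b c * ev1 a b (!c) := by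
  intro l
  induction l with
  | nil => intro c _; left; rfl
  | cons d r ih =>
    intro c hnd
    have hcd : c ≠ d := fun h => hnd (Or.inl h)
    have hnd' : ¬ dbl (d :: r) := fun h => hnd (Or.inr h)
    have hdc : d = !c := by cases c <;> cases d <;> simp_all
    rw [evW_cons a b c (d :: r) (by simp)]
    rcases ih d hnd' with h | h
    · right; rw [h, hdc]
    · left
      rw [h, hdc]
      cases c with
      | false => show b * (a * b) = b; exact hba' hba
      | true => show a * (b * a) = a; exact hab' hab

include hab hba in
lemma val_T (w : List Bool) (hw : w ≠ []) (hnd : ¬ dbl w) : evW a b w ∈ Tset a b := by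
  cases w with
  | nil => exact absurd rfl hw
  | cons c l =>
    rcases alt_val hab hba l c hnd with h | h <;> rw [h] <;> cases c <;>
      simp [Tset, ev1]

lemma repW : ∀ x ∈ Subsemigroup.closure ({a, b} : Set S),
    ∃ w : List Bool, w ≠ [] ∧ evW a b w = x := by
  intro x hx
  induction hx using Subsemigroup.closure_induction with
  | mem x hx =>
    rcases hx with rfl | rfl
    · exact ⟨[true], by simp, rfl⟩
    · exact ⟨[false], by simp, rfl⟩
  | mul x y hx hy ihx ihy =>
    obtain ⟨wx, hwx, hvx⟩ := ihx
    obtain ⟨wy, hwy, hvy⟩ := ihy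
    exact ⟨wx ++ wy, by simp [hwx],
      by rw [evW_append a b wx wy hwx hwy, hvx, hvy]⟩

include hab hba in
lemma word_dbl (x : S) (hx : x ∈ Subsemigroup.closure ({a, b} : Set S))
    (hnT : x ∉ Tset a b) : ∃ w : List Bool, w ≠ [] ∧ evW a b w = x ∧ dbl w := by
  obtain ⟨w, hw, hv⟩ := repW x hx
  by_cases hd : dbl w
  · exact ⟨w, hw, hv, hd⟩
  · exact absurd (hv ▸ val_T hab hba w hw hd) hnT

end Assemble

/-- iterated powers in a semigroup : `pw s n = s^(n+1)` -/
def pw {S : Type*} [Semigroup S] (s : S) : ℕ → S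
  | 0 => s
  | n + 1 => s * pw s n

section Grp
variable {S : Type*} [Semigroup S] {a b : S}

lemma bothGrp (hab : a * b * a = a)
    (hh1 : a * b = a * a * (b * b)) (hh2 : b * a = b * b * (a * a)) :
    InSubgroup a := by
  have hab'' : a * (b * a) = a := by rw [← mul_assoc]; exact hab
  have ha2 : a = a * (a * (b * (b * a))) := by
    calc a = (a * b) * a := hab.symm
      _ = (a * a * (b * b)) * a := by rw [hh1]
      _ = a * (a * (b * (b * a))) := by simp only [mul_assoc]
  have ha2' : a = (a * (b * b)) * (a * a) := by
    calc a = a * (b * a) := hab''.symm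
      _ = a * (b * b * (a * a)) := by rw [hh2]
      _ = (a * (b * b)) * (a * a) := by simp only [mul_assoc]
  set v : S := b * (b * a) with hv
  set u : S := a * (b * b) with hu
  have hxy : a * v = u * a := by
    have e1 : a * v = (u * (a * a)) * v := congrArg (· * v) ha2'
    have e2 : (u * (a * a)) * v = u * (a * (a * v)) := by simp only [mul_assoc]
    have e3 : u * (a * (a * v)) = u * a := congrArg (u * ·) ha2.symm
    exact e1.trans (e2.trans e3)
  set h : S := a * v with hh
  -- after `set`, ha2 : a = a * h, hxy : h = u * a
  have hah : a * h = a := ha2.symm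
  have hha : h * a = a := by
    rw [hxy, mul_assoc]; exact ha2'.symm
  have hhh : h * h = h := by
    calc h * h = h * (a * v) := congrArg (h * ·) hh
      _ = (h * a) * v := (mul_assoc _ _ _).symm
      _ = a * v := by rw [hha]
      _ = h := hh.symm
  have haw0 : a * (u * h) = h := by
    calc a * (u * h) = a * (u * (a * v)) := congrArg (fun z => a * (u * z)) hh
      _ = (a * (u * a)) * v := by simp only [mul_assoc]
      _ = (a * h) * v := by rw [← hxy]
      _ = a * v := by rw [← ha2]
      _ = h := hh.symm
  have hw0a : (u * h) * a = h := by
    calc (u * h) * a = u * (h * a) := mul_assoc _ _ _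
      _ = u * a := by rw [hha]
      _ = h := hxy.symm
  set w : S := (h * (u * h)) * h with hw
  have haw : a * w = h := by
    calc a * w = a * ((h * (u * h)) * h) := congrArg (a * ·) hw
      _ = ((a * h) * (u * h)) * h := by simp only [mul_assoc]
      _ = (a * (u * h)) * h := by rw [← ha2]
      _ = h * h := by rw [haw0]
      _ = h := hhh
  have hwa : w * a = h := by
    calc w * a = ((h * (u * h)) * h) * a := congrArg (· * a) hw
      _ = (h * (u * h)) * (h * a) := mul_assoc _ _ _
      _ = (h * (u * h)) * a := by rw [hha]
      _ = h * ((u * h) * a) := mul_assoc _ _ _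
      _ = h * h := by rw [hw0a]
      _ = h := hhh
  have hhw : h * w = w := by
    calc h * w = h * ((h * (u * h)) * h) := congrArg (h * ·) hw
      _ = ((h * h) * (u * h)) * h := by simp only [mul_assoc]
      _ = (h * (u * h)) * h := by rw [hhh]
      _ = w := hw.symm
  have hwh : w * h = w := by
    calc w * h = ((h * (u * h)) * h) * h := congrArg (· * h) hw
      _ = (h * (u * h)) * (h * h) := mul_assoc _ _ _
      _ = (h * (u * h)) * h := by rw [hhh]
      _ = w := hw.symm
  clear_value w
  clear_value h
  clear hv hu hxy haw0 hw0a hh hw ha2 ha2' hab'' hh1 hh2 hab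
  -- powers
  have F1 : ∀ n, h * pw a n = pw a n := by
    intro n; induction n with
    | zero => exact hha
    | succ n ih => show h * (a * pw a n) = a * pw a n; rw [← mul_assoc, hha]
  have F2 : ∀ n, pw a n * h = pw a n := by
    intro n; induction n with
    | zero => exact hah
    | succ n ih => show (a * pw a n) * h = a * pw a n; rw [mul_assoc, ih]
  have F3 : ∀ n, h * pw w n = pw w n := by
    intro n; induction n with
    | zero => exact hhw
    | succ n ih => show h * (w * pw w n) = w * pw w n; rw [← mul_assoc, hhw]
  have F4 : ∀ n, pw w n * h = pw w n := by
    intro n; induction n with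
    | zero => exact hwh
    | succ n ih => show (w * pw w n) * h = w * pw w n; rw [mul_assoc, ih]
  have Fcomm : a * w = w * a := haw.trans hwa.symm
  have Fcomm2 : ∀ n, pw a n * w = w * pw a n := by
    intro n; induction n with
    | zero => exact Fcomm
    | succ n ih =>
      show (a * pw a n) * w = w * (a * pw a n)
      calc (a * pw a n) * w = a * (pw a n * w) := mul_assoc _ _ _
        _ = a * (w * pw a n) := by rw [ih]
        _ = (a * w) * pw a n := (mul_assoc _ _ _).symm
        _ = (w * a) * pw a n := by rw [Fcomm]
        _ = w * (a * pw a n) := mul_assoc _ _ _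
  have Fcomm3 : ∀ m n, pw a m * pw w n = pw w n * pw a m := by
    intro m n; induction n with
    | zero => exact Fcomm2 m
    | succ n ih =>
      show pw a m * (w * pw w n) = (w * pw w n) * pw a m
      calc pw a m * (w * pw w n) = (pw a m * w) * pw w n := (mul_assoc _ _ _).symm
        _ = (w * pw a m) * pw w n := by rw [Fcomm2 m]
        _ = w * (pw a m * pw w n) := mul_assoc _ _ _
        _ = w * (pw w n * pw a m) := by rw [ih]
        _ = (w * pw w n) * pw a m := (mul_assoc _ _ _).symm
  have Finv : ∀ n, pw a n * pw w n = h := by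
    intro n; induction n with
    | zero => exact haw
    | succ n ih =>
      show (a * pw a n) * (w * pw w n) = h
      calc (a * pw a n) * (w * pw w n) = a * (pw a n * (w * pw w n)) := mul_assoc _ _ _
        _ = a * ((pw a n * w) * pw w n) := congrArg (a * ·) (mul_assoc _ _ _).symm
        _ = a * ((w * pw a n) * pw w n) := by rw [Fcomm2 n]
        _ = a * (w * (pw a n * pw w n)) := congrArg (a * ·) (mul_assoc _ _ _)
        _ = a * (w * h) := by rw [ih]
        _ = (a * w) * h := (mul_assoc _ _ _).symm
        _ = h * h := by rw [haw]
        _ = h := hhh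
  have Finv' : ∀ n, pw w n * pw a n = h := by
    intro n; rw [← Fcomm3 n n]; exact Finv n
  -- the subgroup
  refine ⟨{x | x = h ∨ (∃ n, x = pw a n) ∨ (∃ n, x = pw w n)},
    Or.inr (Or.inl ⟨0, rfl⟩), ?_, h, Or.inl rfl, ?_, ?_⟩
  · -- closure
    have mhG : ∀ y, (y = h ∨ (∃ n, y = pw a n) ∨ (∃ n, y = pw w n)) →
        (h * y = h ∨ (∃ n, h * y = pw a n) ∨ (∃ n, h * y = pw w n)) := by
      rintro y (rfl | ⟨n, rfl⟩ | ⟨n, rfl⟩)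
      · exact Or.inl hhh
      · exact Or.inr (Or.inl ⟨n, F1 n⟩)
      · exact Or.inr (Or.inr ⟨n, F3 n⟩)
    have maG : ∀ y, (y = h ∨ (∃ n, y = pw a n) ∨ (∃ n, y = pw w n)) →
        (a * y = h ∨ (∃ n, a * y = pw a n) ∨ (∃ n, a * y = pw w n)) := by
      rintro y (rfl | ⟨n, rfl⟩ | ⟨n, rfl⟩)
      · exact Or.inr (Or.inl ⟨0, hah⟩)
      · exact Or.inr (Or.inl ⟨n + 1, rfl⟩)
      · cases n with
        | zero => exact Or.inl haw
        | succ n =>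
          refine Or.inr (Or.inr ⟨n, ?_⟩)
          show a * (w * pw w n) = pw w n
          rw [← mul_assoc, haw, F3]
    have mwG : ∀ y, (y = h ∨ (∃ n, y = pw a n) ∨ (∃ n, y = pw w n)) →
        (w * y = h ∨ (∃ n, w * y = pw a n) ∨ (∃ n, w * y = pw w n)) := by
      rintro y (rfl | ⟨n, rfl⟩ | ⟨n, rfl⟩)
      · exact Or.inr (Or.inr ⟨0, hwh⟩)
      · cases n with
        | zero => exact Or.inl hwa
        | succ n =>
          refine Or.inr (Or.inl ⟨n, ?_⟩)
          show w * (a * pw a n) = pw a n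
          rw [← mul_assoc, hwa, F1]
      · exact Or.inr (Or.inr ⟨n + 1, rfl⟩)
    rintro x (rfl | ⟨m, rfl⟩ | ⟨m, rfl⟩) y hy
    · exact mhG y hy
    · induction m with
      | zero => exact maG y hy
      | succ m ih =>
        have e : pw a (m + 1) * y = a * (pw a m * y) := mul_assoc a (pw a m) y
        rw [e]
        exact maG _ ih
    · induction m with
      | zero => exact mwG y hy
      | succ m ih =>
        have e : pw w (m + 1) * y = w * (pw w m * y) := mul_assoc w (pw w m) y
        rw [e]
        exact mwG _ ih
  · -- identity
    rintro x (rfl | ⟨n, rfl⟩ | ⟨n, rfl⟩)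
    · exact ⟨hhh, hhh⟩
    · exact ⟨F1 n, F2 n⟩
    · exact ⟨F3 n, F4 n⟩
  · -- inverses
    rintro x (rfl | ⟨n, rfl⟩ | ⟨n, rfl⟩)
    · exact ⟨x, Or.inl rfl, hhh, hhh⟩
    · exact ⟨pw w n, Or.inr (Or.inr ⟨n, rfl⟩), Finv n, Finv' n⟩
    · exact ⟨pw a n, Or.inr (Or.inl ⟨n, rfl⟩), Finv' n, Finv n⟩

end Grp

theorem stmt17 {S : Type*} [Semigroup S] (hO : Orthodox S) (a b : S)
    (h1 : a * b * a = a) (h2 : b * a * b = b) (hng : ¬ InSubgroup a) :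
    (∀ x y : Subsemigroup.closure ({a, b} : Set S),
        ((x : S) ∉ ({a, b, a * b, b * a} : Set S) →
          ((x * y : S) ∉ ({a, b, a * b, b * a} : Set S) ∧
           (y * x : S) ∉ ({a, b, a * b, b * a} : Set S))) ∧
        ((x : S) ∈ ({a, b, a * b, b * a} : Set S) →
          (y : S) ∈ ({a, b, a * b, b * a} : Set S) → GreenD x y) ∧
        ((x : S) ∈ ({a, b, a * b, b * a} : Set S) → GreenD x y →
          (y : S) ∈ ({a, b, a * b, b * a} : Set S))) ∨
    (a * b = a * a * (b * b) ∧ b * a ≠ b * b * (a * a)) ∨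
    (b * a = b * b * (a * a) ∧ a * b ≠ a * a * (b * b)) := by
  obtain ⟨hreg, hic⟩ := hO
  by_cases hh1 : a * b = a * a * (b * b)
  · by_cases hh2 : b * a = b * b * (a * a)
    · exact absurd (bothGrp h1 hh1 hh2) hng
    · exact Or.inr (Or.inl ⟨hh1, hh2⟩)
  · by_cases hh2 : b * a = b * b * (a * a)
    · exact Or.inr (Or.inr ⟨hh2, hh1⟩)
    · -- the "neither" case : the top D-class is {a, b, ab, ba}
      left
      have maA : a ∈ Subsemigroup.closure ({a, b} : Set S) :=
        Subsemigroup.subset_closure (by simp)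
      have mbA : b ∈ Subsemigroup.closure ({a, b} : Set S) :=
        Subsemigroup.subset_closure (by simp)
      intro x y
      refine ⟨?_, ?_, ?_⟩
      · -- ideal property
        intro hx
        have hx' : (x : S) ∉ Tset a b := hx
        obtain ⟨wx, hwx0, hwxv, hwxd⟩ := word_dbl h1 h2 (x : S) x.2 hx'
        obtain ⟨wy, hwy0, hwyv⟩ := repW (y : S) y.2
        constructor
        · show ((x * y : Subsemigroup.closure ({a, b} : Set S)) : S) ∉ Tset a b
          have hcoe : ((x * y : Subsemigroup.closure ({a, b} : Set S)) : S)
              = (x : S) * (y : S) := rfl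
          rw [hcoe, ← hwxv, ← hwyv, ← evW_append a b wx wy hwx0 hwy0]
          exact ML h1 h2 hic hh1 hh2 (wx ++ wy).length _ le_rfl
            (dbl_append_left wy hwxd)
        · show ((y * x : Subsemigroup.closure ({a, b} : Set S)) : S) ∉ Tset a b
          have hcoe : ((y * x : Subsemigroup.closure ({a, b} : Set S)) : S)
              = (y : S) * (x : S) := rfl
          rw [hcoe, ← hwxv, ← hwyv, ← evW_append a b wy wx hwy0 hwx0]
          exact ML h1 h2 hic hh1 hh2 (wy ++ wx).length _ le_rfl
            (dbl_append_right wy hwxd)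
      · -- all of {a, b, ab, ba} is a single D-class
        intro hx hy
        set xa : Subsemigroup.closure ({a, b} : Set S) := ⟨a, maA⟩ with hxa
        set xb : Subsemigroup.closure ({a, b} : Set S) := ⟨b, mbA⟩ with hxb
        have Eaf : xa * (xb * xa) = xa := Subtype.ext (hab' h1)
        have Eea : (xa * xb) * xa = xa := Subtype.ext h1
        have Ebe : xb * (xa * xb) = xb := Subtype.ext (hba' h2)
        have Efb : (xb * xa) * xb = xb := Subtype.ext h2
        have GLrefl : ∀ z : Subsemigroup.closure ({a, b} : Set S), GreenL z z := fun z =>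
          ⟨⟨1, (one_mul _).symm⟩, ⟨1, (one_mul _).symm⟩⟩
        have GRrefl : ∀ z : Subsemigroup.closure ({a, b} : Set S), GreenR z z := fun z =>
          ⟨⟨1, (mul_one _).symm⟩, ⟨1, (mul_one _).symm⟩⟩
        have GLaf : GreenL xa (xb * xa) :=
          ⟨⟨(xa : WithOne (Subsemigroup.closure ({a, b} : Set S))), by rw [← WithOne.coe_mul, Eaf]⟩,
           ⟨(xb : WithOne (Subsemigroup.closure ({a, b} : Set S))), by rw [← WithOne.coe_mul]⟩⟩
        have GLfa : GreenL (xb * xa) xa :=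
          ⟨⟨(xb : WithOne (Subsemigroup.closure ({a, b} : Set S))), by rw [← WithOne.coe_mul]⟩,
           ⟨(xa : WithOne (Subsemigroup.closure ({a, b} : Set S))), by rw [← WithOne.coe_mul, Eaf]⟩⟩
        have GLbe : GreenL xb (xa * xb) :=
          ⟨⟨(xb : WithOne (Subsemigroup.closure ({a, b} : Set S))), by rw [← WithOne.coe_mul, Ebe]⟩,
           ⟨(xa : WithOne (Subsemigroup.closure ({a, b} : Set S))), by rw [← WithOne.coe_mul]⟩⟩
        have GLeb : GreenL (xa * xb) xb :=
          ⟨⟨(xa : WithOne (Subsemigroup.closure ({a, b} : Set S))), by rw [← WithOne.coe_mul]⟩,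
           ⟨(xb : WithOne (Subsemigroup.closure ({a, b} : Set S))), by rw [← WithOne.coe_mul, Ebe]⟩⟩
        have GRea : GreenR (xa * xb) xa :=
          ⟨⟨(xb : WithOne (Subsemigroup.closure ({a, b} : Set S))), by rw [← WithOne.coe_mul]⟩,
           ⟨(xa : WithOne (Subsemigroup.closure ({a, b} : Set S))), by rw [← WithOne.coe_mul, Eea]⟩⟩
        have GRae : GreenR xa (xa * xb) :=
          ⟨⟨(xa : WithOne (Subsemigroup.closure ({a, b} : Set S))), by rw [← WithOne.coe_mul, Eea]⟩,
           ⟨(xb : WithOne (Subsemigroup.closure ({a, b} : Set S))), by rw [← WithOne.coe_mul]⟩⟩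
        have GRfb : GreenR (xb * xa) xb :=
          ⟨⟨(xa : WithOne (Subsemigroup.closure ({a, b} : Set S))), by rw [← WithOne.coe_mul]⟩,
           ⟨(xb : WithOne (Subsemigroup.closure ({a, b} : Set S))), by rw [← WithOne.coe_mul, Efb]⟩⟩
        have GRbf : GreenR xb (xb * xa) :=
          ⟨⟨(xb : WithOne (Subsemigroup.closure ({a, b} : Set S))), by rw [← WithOne.coe_mul, Efb]⟩,
           ⟨(xa : WithOne (Subsemigroup.closure ({a, b} : Set S))), by rw [← WithOne.coe_mul]⟩⟩
        simp only [Set.mem_insert_iff, Set.mem_singleton_iff] at hx hy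
        have hx' : x = xa ∨ x = xb ∨ x = xa * xb ∨ x = xb * xa := by
          rcases hx with h | h | h | h
          · exact Or.inl (Subtype.ext h)
          · exact Or.inr (Or.inl (Subtype.ext h))
          · exact Or.inr (Or.inr (Or.inl (Subtype.ext h)))
          · exact Or.inr (Or.inr (Or.inr (Subtype.ext h)))
        have hy' : y = xa ∨ y = xb ∨ y = xa * xb ∨ y = xb * xa := by
          rcases hy with h | h | h | h
          · exact Or.inl (Subtype.ext h)
          · exact Or.inr (Or.inl (Subtype.ext h))
          · exact Or.inr (Or.inr (Or.inl (Subtype.ext h)))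
          · exact Or.inr (Or.inr (Or.inr (Subtype.ext h)))
        rcases hx' with rfl | rfl | rfl | rfl <;> rcases hy' with rfl | rfl | rfl | rfl
        · exact ⟨xa, GLrefl xa, GRrefl xa⟩
        · exact ⟨xb * xa, GLaf, GRfb⟩
        · exact ⟨xa, GLrefl xa, GRae⟩
        · exact ⟨xb * xa, GLaf, GRrefl _⟩
        · exact ⟨xa * xb, GLbe, GRea⟩
        · exact ⟨xb, GLrefl xb, GRrefl xb⟩
        · exact ⟨xa * xb, GLbe, GRrefl _⟩
        · exact ⟨xb, GLrefl xb, GRbf⟩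
        · exact ⟨xa * xb, GLrefl _, GRea⟩
        · exact ⟨xb, GLeb, GRrefl xb⟩
        · exact ⟨xa * xb, GLrefl _, GRrefl _⟩
        · exact ⟨xb, GLeb, GRbf⟩
        · exact ⟨xa, GLfa, GRrefl xa⟩
        · exact ⟨xb * xa, GLrefl _, GRfb⟩
        · exact ⟨xa, GLfa, GRae⟩
        · exact ⟨xb * xa, GLrefl _, GRrefl _⟩
      · -- the D-class of an element of {a,b,ab,ba} stays in it
        intro hx hD
        by_contra hy
        have hy' : (y : S) ∉ Tset a b := hy
        have hx' : (x : S) ∈ Tset a b := hx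
        obtain ⟨wy, hwy0, hwyv, hwyd⟩ := word_dbl h1 h2 (y : S) y.2 hy'
        obtain ⟨z, hL, hR⟩ := hD
        obtain ⟨⟨s, hs⟩, -⟩ := hL
        obtain ⟨⟨t, ht⟩, -⟩ := hR
        rw [ht] at hs
        have hcases : ∀ u : WithOne (Subsemigroup.closure ({a, b} : Set S)),
            u = 1 ∨ ∃ m : Subsemigroup.closure ({a, b} : Set S),
              u = (↑m : WithOne (Subsemigroup.closure ({a, b} : Set S))) :=
          fun u => WithOne.cases_on u (Or.inl rfl) (fun m => Or.inr ⟨m, rfl⟩)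
        rcases hcases s with rfl | ⟨s₀, rfl⟩
        · rcases hcases t with rfl | ⟨t₀, rfl⟩
          · have hxy : x = y := WithOne.coe_inj.mp (by simpa using hs)
            rw [hxy] at hx'
            exact hy' hx'
          · obtain ⟨wt, hwt0, hwtv⟩ := repW (t₀ : S) t₀.2
            have hse : (x : WithOne (Subsemigroup.closure ({a, b} : Set S)))
                = ((y * t₀ : Subsemigroup.closure ({a, b} : Set S)) : WithOne _) := by
              rw [WithOne.coe_mul]; simpa using hs
            have hxe : x = y * t₀ := WithOne.coe_inj.mp hse
            have hvS : (x : S) = (y : S) * (t₀ : S) := by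
              rw [hxe]; rfl
            have hnot : (x : S) ∉ Tset a b := by
              rw [hvS, ← hwyv, ← hwtv, ← evW_append a b wy wt hwy0 hwt0]
              exact ML h1 h2 hic hh1 hh2 (wy ++ wt).length _ le_rfl
                (dbl_append_left wt hwyd)
            exact hnot hx'
        · rcases hcases t with rfl | ⟨t₀, rfl⟩
          · obtain ⟨ws, hws0, hwsv⟩ := repW (s₀ : S) s₀.2
            have hse : (x : WithOne (Subsemigroup.closure ({a, b} : Set S)))
                = ((s₀ * y : Subsemigroup.closure ({a, b} : Set S)) : WithOne _) := by
              rw [WithOne.coe_mul]; simpa using hs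
            have hxe : x = s₀ * y := WithOne.coe_inj.mp hse
            have hvS : (x : S) = (s₀ : S) * (y : S) := by
              rw [hxe]; rfl
            have hnot : (x : S) ∉ Tset a b := by
              rw [hvS, ← hwyv, ← hwsv, ← evW_append a b ws wy hws0 hwy0]
              exact ML h1 h2 hic hh1 hh2 (ws ++ wy).length _ le_rfl
                (dbl_append_right ws hwyd)
            exact hnot hx'
          · obtain ⟨ws, hws0, hwsv⟩ := repW (s₀ : S) s₀.2
            obtain ⟨wt, hwt0, hwtv⟩ := repW (t₀ : S) t₀.2
            have hse : (x : WithOne (Subsemigroup.closure ({a, b} : Set S)))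
                = ((s₀ * (y * t₀) : Subsemigroup.closure ({a, b} : Set S)) : WithOne _) := by
              rw [WithOne.coe_mul, WithOne.coe_mul]; exact hs
            have hxe : x = s₀ * (y * t₀) := WithOne.coe_inj.mp hse
            have hvS : (x : S) = (s₀ : S) * ((y : S) * (t₀ : S)) := by
              rw [hxe]; rfl
            have hnot : (x : S) ∉ Tset a b := by
              rw [hvS, ← hwyv, ← hwtv, ← hwsv, ← evW_append a b wy wt hwy0 hwt0,
                ← evW_append a b ws (wy ++ wt) hws0 (by simp [hwy0])]
              exact ML h1 h2 hic hh1 hh2 (ws ++ (wy ++ wt)).length _ le_rfl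
                (dbl_append_right ws (dbl_append_left wt hwyd))
            exact hnot hx'


end PaperStmt
end

section
/- Let S = ⟨a,b⟩ be an orthodox semigroup generated by mutually inverse elements a, b such that a lies in a subgroup of S. Then the set of idempotents of S is a rectangular band contained in {ab²a, ab, ba, ba²b} (in particular S has at most four idempotents), and efe = e for all idempotents e, f of S. -/
namespace PaperStmt

set_option maxHeartbeats 2000000 in
theorem stmt18 {S : Type*} [Semigroup S] (hO : Orthodox S) (a b : S)
    (hgen : Subsemigroup.closure ({a, b} : Set S) = ⊤)
    (h1 : a * b * a = a) (h2 : b * a * b = b) (hg : InSubgroup a) :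
    (∀ e : S, e * e = e → e ∈ ({a * b * b * a, a * b, b * a, b * a * a * b} : Set S)) ∧
    (∀ e f : S, e * e = e → f * f = f → e * f * (e * f) = e * f ∧ e * f * e = e) := by
  obtain ⟨-, hidem⟩ := hO
  obtain ⟨G, haG, -, f, hfG, hfid, hinv⟩ := hg
  obtain ⟨hfa, haf⟩ := hfid a haG
  obtain ⟨a', -, haa', ha'a⟩ := hinv a haG
  have hff : f * f = f := (hfid f hfG).1
  have n1 : ∀ x : S, a * (b * (a * x)) = a * x := fun x => by
    rw [← mul_assoc, ← mul_assoc, h1]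
  have n1' : a * (b * a) = a := by rw [← mul_assoc, h1]
  have n2 : ∀ x : S, b * (a * (b * x)) = b * x := fun x => by
    rw [← mul_assoc, ← mul_assoc, h2]
  have n2' : b * (a * b) = b := by rw [← mul_assoc, h2]
  have hab : (a*b)*(a*b) = a*b := by simp only [mul_assoc, n2']
  have hba : (b*a)*(b*a) = b*a := by simp only [mul_assoc, n1']
  have hq : ((b*a)*(a*b))*((b*a)*(a*b)) = (b*a)*(a*b) := hidem _ _ hba hab
  have e1 : a * ((a*b)*(b*a)) * a = a * (((b*a)*(a*b))*((b*a)*(a*b))) * a := by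
    simp only [mul_assoc, n1, n1', n2, n2']
  have e3 : a * ((b*a)*(a*b)) * a = a * a := by
    simp only [mul_assoc, n1, n1']
  have hapa : a * ((a*b)*(b*a)) * a = a * a := by rw [e1, hq, e3]
  have s3 : a' * (a * ((a*b)*(b*a)) * a) * a' = f := by
    rw [hapa]
    calc a' * (a*a) * a' = (a'*a) * (a*a') := by simp only [mul_assoc]
    _ = f := by rw [ha'a, haa', hff]
  have hfP : f * ((a*b)*(b*a)) = (a*b)*(b*a) := by
    calc f * ((a*b)*(b*a)) = (f*a) * (b*(b*a)) := by simp only [mul_assoc]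
    _ = (a*b)*(b*a) := by rw [hfa]; simp only [mul_assoc]
  have hPf : ((a*b)*(b*a)) * f = (a*b)*(b*a) := by
    calc ((a*b)*(b*a)) * f = a * (b*(b*(a*f))) := by simp only [mul_assoc]
    _ = (a*b)*(b*a) := by rw [haf]; simp only [mul_assoc]
  have hP : (a*b)*(b*a) = f := by
    have s4 : a' * (a * ((a*b)*(b*a)) * a) * a' = (a*b)*(b*a) := by
      calc a' * (a * ((a*b)*(b*a)) * a) * a'
          = (a'*a) * (((a*b)*(b*a)) * (a*a')) := by simp only [mul_assoc]
      _ = f * (((a*b)*(b*a)) * f) := by rw [ha'a, haa']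
      _ = (a*b)*(b*a) := by rw [hPf, hfP]
    rw [← s4, s3]
  -- derived word-rewriting rules (aabba → a, abbaa → a)
  have nA : ∀ x : S, a*(a*(b*(b*(a*x)))) = a*x := fun x => by
    have h : a*(a*(b*(b*(a*x)))) = (a*((a*b)*(b*a)))*x := by simp only [mul_assoc]
    rw [h, hP, haf]
  have nA' : a*(a*(b*(b*a))) = a := by
    have h : a*(a*(b*(b*a))) = a*((a*b)*(b*a)) := by simp only [mul_assoc]
    rw [h, hP, haf]
  have nB : ∀ x : S, a*(b*(b*(a*(a*x)))) = a*x := fun x => by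
    have h : a*(b*(b*(a*(a*x)))) = ((a*b)*(b*a))*(a*x) := by simp only [mul_assoc]
    rw [h, hP, ← mul_assoc, hfa]
  have nB' : a*(b*(b*(a*a))) = a := by
    have h : a*(b*(b*(a*a))) = ((a*b)*(b*a))*a := by simp only [mul_assoc]
    rw [h, hP, hfa]
  -- the four-element set is closed and rectangular
  have mtab : ∀ u ∈ ({a * b * b * a, a * b, b * a, b * a * a * b} : Set S),
      ∀ v ∈ ({a * b * b * a, a * b, b * a, b * a * a * b} : Set S),
      u * v ∈ ({a * b * b * a, a * b, b * a, b * a * a * b} : Set S) ∧ (u*v)*u = u := by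
    intro u hu v hv
    simp only [Set.mem_insert_iff, Set.mem_singleton_iff] at hu hv
    rcases hu with rfl|rfl|rfl|rfl <;> rcases hv with rfl|rfl|rfl|rfl <;>
      constructor <;>
      simp [Set.mem_insert_iff, Set.mem_singleton_iff, mul_assoc, n1, n2, nA, nB,
        n1', n2', nA', nB']
  -- sandwich lemma
  have sandwich : ∀ u u' v v' : S, u*(u'*u) = u → (u'*u)*u' = u' →
      ((u'*u)*(v*v'))*(u'*u) = u'*u → (u*v)*(v'*u') = u*u' := by
    intro u u' v v' h4 h5 hrect
    calc (u*v)*(v'*u') = u*((v*v')*((u'*u)*u')) := by rw [h5]; simp only [mul_assoc]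
    _ = (u*(u'*u))*((v*v')*((u'*u)*u')) := by rw [h4]
    _ = (u*(((u'*u)*(v*v'))*(u'*u)))*u' := by simp only [mul_assoc]
    _ = (u*(u'*u))*u' := by rw [hrect]
    _ = u*u' := by rw [h4]
  -- main induction
  have main : ∀ x : S, ∃ x' : S,
      (x*x' ∈ ({a * b * b * a, a * b, b * a, b * a * a * b} : Set S)) ∧
      (x'*x ∈ ({a * b * b * a, a * b, b * a, b * a * a * b} : Set S)) ∧
      (x*x')*x = x ∧ x*(x'*x) = x ∧ (x'*x)*x' = x' ∧ x'*(x*x') = x' := by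
    intro x
    have hx : x ∈ Subsemigroup.closure ({a,b} : Set S) := by
      rw [hgen]; exact Subsemigroup.mem_top x
    induction hx using Subsemigroup.closure_induction with
    | mem z hz =>
      rcases hz with rfl | rfl
      · exact ⟨b, by right; left; rfl, by right; right; left; rfl, h1, n1', h2, n2'⟩
      · exact ⟨a, by right; right; left; rfl, by right; left; rfl, h2, n2', h1, n1'⟩
    | mul x y hxc hyc Px Py =>
      obtain ⟨x', hxe, hxf, hx3, hx4, hx5, hx6⟩ := Px
      obtain ⟨y', hyg, hyh, hy3, hy4, hy5, hy6⟩ := Py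
      have rfg : ((x'*x)*(y*y'))*(x'*x) = x'*x := (mtab _ hxf _ hyg).2
      have rgf : ((y*y')*(x'*x))*(y*y') = y*y' := (mtab _ hyg _ hxf).2
      have c1 : (x*y)*(y'*x') = x*x' := sandwich x x' y y' hx4 hx5 rfg
      have c2 : (y'*x')*(x*y) = y'*y := sandwich y' y x' x hy6 hy3 rgf
      refine ⟨y'*x', c1 ▸ hxe, c2 ▸ hyh, ?_, ?_, ?_, ?_⟩
      · rw [c1, ← mul_assoc, hx3]
      · rw [c2, mul_assoc, hy4]
      · rw [c2, ← mul_assoc, hy5]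
      · rw [c1, mul_assoc, hx6]
  have part1 : ∀ e : S, e * e = e →
      e ∈ ({a * b * b * a, a * b, b * a, b * a * a * b} : Set S) := by
    intro e he
    obtain ⟨e', m1, m2, c3, c4, c5, c6⟩ := main e
    have hFe : (e'*e)*e = e'*e := by rw [mul_assoc, he]
    have rectEF : ((e*e')*(e'*e))*(e*e') = e*e' := (mtab _ m1 _ m2).2
    have key : e = (e*e')*(e'*e) := by
      calc e = (e*e')*e := c3.symm
      _ = (((e*e')*(e'*e))*(e*e'))*e := by rw [rectEF]
      _ = ((e*e')*(e'*e))*((e*e')*e) := by simp only [mul_assoc]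
      _ = ((e*e')*(e'*e))*e := by rw [c3]
      _ = (e*e')*((e'*e)*e) := by simp only [mul_assoc]
      _ = (e*e')*(e'*e) := by rw [hFe]
    rw [key]
    exact (mtab _ m1 _ m2).1
  exact ⟨part1, fun e f' he hf' =>
    ⟨hidem e f' he hf', (mtab e (part1 e he) f' (part1 f' hf')).2⟩⟩

end PaperStmt
end

section
/- Let S = ⟨a,b⟩ be an orthodox semigroup generated by mutually inverse elements a, b such that a lies in a subgroup of S, and suppose a(ab) = a and (ab)b = b. Then S is a group with identity ab, namely S = H_a is a cyclic group generated by a. -/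
namespace PaperStmt

lemma coe_pow_exists {S : Type*} [Semigroup S] (x : S) :
    ∀ n : ℕ, 1 ≤ n → ∃ y : S, (↑x : WithOne S) ^ n = ↑y := by
  intro n hn
  induction n, hn using Nat.le_induction with
  | base => exact ⟨x, pow_one _⟩
  | succ n hn ih =>
    obtain ⟨y, hy⟩ := ih
    exact ⟨y * x, by rw [pow_succ, hy, WithOne.coe_mul]⟩

lemma mixed_one {S : Type*} [Semigroup S] (u v e : S)
    (huv : u * v = e) (hl : ∀ x : S, e * x = x) :
    ∀ m : ℕ, 1 ≤ m → (↑u : WithOne S) * (↑v) ^ m = ↑e ∨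
      ∃ k, 1 ≤ k ∧ (↑u : WithOne S) * (↑v) ^ m = (↑v) ^ k := by
  intro m hm
  induction m, hm using Nat.le_induction with
  | base => exact Or.inl (by rw [pow_one, ← WithOne.coe_mul, huv])
  | succ m hm _ =>
    refine Or.inr ⟨m, hm, ?_⟩
    obtain ⟨y, hy⟩ := coe_pow_exists v m hm
    rw [pow_succ', ← mul_assoc, ← WithOne.coe_mul, huv, hy, ← WithOne.coe_mul, hl]

lemma mixed {S : Type*} [Semigroup S] (u v e : S)
    (huv : u * v = e) (hl : ∀ x : S, e * x = x) (hr : ∀ x : S, x * e = x) :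
    ∀ n m : ℕ, 1 ≤ n → 1 ≤ m →
      (↑u : WithOne S) ^ n * (↑v) ^ m = ↑e ∨
      (∃ k, 1 ≤ k ∧ (↑u : WithOne S) ^ n * (↑v) ^ m = (↑u) ^ k) ∨
      (∃ k, 1 ≤ k ∧ (↑u : WithOne S) ^ n * (↑v) ^ m = (↑v) ^ k) := by
  intro n m hn hm
  induction n, hn using Nat.le_induction generalizing m with
  | base =>
    rw [pow_one]
    rcases mixed_one u v e huv hl m hm with h | ⟨k, hk, h⟩
    · exact Or.inl h
    · exact Or.inr (Or.inr ⟨k, hk, h⟩)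
  | succ n hn ih =>
    have : (↑u : WithOne S) ^ (n + 1) * (↑v) ^ m = (↑u) ^ n * ((↑u) * (↑v) ^ m) := by
      rw [pow_succ, mul_assoc]
    rcases mixed_one u v e huv hl m hm with h | ⟨k, hk, h⟩
    · refine Or.inr (Or.inl ⟨n, hn, ?_⟩)
      rw [this, h]
      obtain ⟨y, hy⟩ := coe_pow_exists u n hn
      rw [hy, ← WithOne.coe_mul, hr]
    · rw [this, h]
      exact ih k hk

theorem stmt19 {S : Type*} [Semigroup S] (hO : Orthodox S) (a b : S)
    (hgen : Subsemigroup.closure ({a, b} : Set S) = ⊤)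
    (h1 : a * b * a = a) (h2 : b * a * b = b) (hg : InSubgroup a)
    (h5 : a * (a * b) = a) (h6 : (a * b) * b = b) :
    (∀ x : S, (a * b) * x = x ∧ x * (a * b) = x) ∧
    (∀ x : S, ∃ y : S, x * y = a * b ∧ y * x = a * b) ∧
    (∀ x : S, GreenH x a) ∧
    (∀ x : S, x = a * b ∨ ∃ n : ℕ, 1 ≤ n ∧
      ((x : WithOne S) = (a : WithOne S) ^ n ∨ (x : WithOne S) = (b : WithOne S) ^ n)) := by
  have hmem : ∀ x : S, x ∈ Subsemigroup.closure ({a, b} : Set S) := by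
    intro x; rw [hgen]; exact Subsemigroup.mem_top x
  -- e := a*b is a two-sided identity for all of S
  have hbe : b * (a * b) = b := by rw [← mul_assoc]; exact h2
  have hid : ∀ x : S, (a * b) * x = x ∧ x * (a * b) = x := by
    intro x
    refine Subsemigroup.closure_induction ?_ ?_ (hmem x)
    · rintro y (rfl | rfl)
      · exact ⟨h1, h5⟩
      · exact ⟨h6, hbe⟩
    · rintro x y _ _ ⟨hx1, hx2⟩ ⟨hy1, hy2⟩
      constructor
      · rw [← mul_assoc, hx1]
      · rw [mul_assoc, hy2]
  -- the identity ε of the subgroup containing a equals a*b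
  obtain ⟨G, haG, hGmul, ε, hεG, hεid, hinv⟩ := hg
  have hεe : ε = a * b := by
    have h₂ : ε * (a * b) = a * b := by rw [← mul_assoc, (hεid a haG).1]
    rw [← h₂, (hid ε).2]
  obtain ⟨c, hcG, hac, hca⟩ := hinv a haG
  rw [hεe] at hac hca
  -- b equals c, hence b*a = a*b
  have hbc : b = c := by
    have : b = (c * a) * b := by rw [hca]; exact ((hid b).1).symm
    rw [this, mul_assoc, (hid c).2]
  have hba : b * a = a * b := by nth_rewrite 1 [hbc]; exact hca
  -- part 2: inverses
  have hinv2 : ∀ x : S, ∃ y : S, x * y = a * b ∧ y * x = a * b := by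
    intro x
    refine Subsemigroup.closure_induction ?_ ?_ (hmem x)
    · rintro y (rfl | rfl)
      · exact ⟨b, rfl, hba⟩
      · exact ⟨a, hba, rfl⟩
    · rintro x y _ _ ⟨x', hx1, hx2⟩ ⟨y', hy1, hy2⟩
      refine ⟨y' * x', ?_, ?_⟩
      · calc x * y * (y' * x') = x * (y * y' * x') := by rw [mul_assoc, mul_assoc]
          _ = x * x' := by rw [hy1, (hid x').1]
          _ = a * b := hx1
      · calc y' * x' * (x * y) = y' * (x' * x * y) := by rw [mul_assoc, mul_assoc]
          _ = y' * y := by rw [hx2, (hid y).1]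
          _ = a * b := hy2
  refine ⟨hid, hinv2, ?_, ?_⟩
  · -- part 3: every element is H-related to a
    intro x
    obtain ⟨y, hxy, hyx⟩ := hinv2 x
    constructor
    · constructor
      · exact ⟨↑(b * x), by
          rw [← WithOne.coe_mul, ← mul_assoc, (hid x).1]⟩
      · exact ⟨↑(y * a), by
          rw [← WithOne.coe_mul, ← mul_assoc, hxy, h1]⟩
    · constructor
      · exact ⟨↑(x * b), by
          rw [← WithOne.coe_mul, mul_assoc, hba, (hid x).2]⟩
      · exact ⟨↑(a * y), by
          rw [← WithOne.coe_mul, mul_assoc, hyx, h5]⟩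
  · -- part 4: every element is e or a power of a or b
    intro x
    have hl : ∀ z : S, (a * b) * z = z := fun z => (hid z).1
    have hr : ∀ z : S, z * (a * b) = z := fun z => (hid z).2
    refine Subsemigroup.closure_induction ?_ ?_ (hmem x)
    · rintro y (rfl | rfl)
      · exact Or.inr ⟨1, le_refl 1, Or.inl (pow_one _).symm⟩
      · exact Or.inr ⟨1, le_refl 1, Or.inr (pow_one _).symm⟩
    · rintro x y _ _ hx hy
      rcases hx with rfl | ⟨n, hn, hx⟩
      · rw [hl y]; exact hy
      rcases hy with rfl | ⟨m, hm, hy⟩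
      · rw [hr x]
        exact Or.inr ⟨n, hn, hx⟩
      · have hxy : ((x * y : S) : WithOne S) = (↑x : WithOne S) * ↑y := WithOne.coe_mul x y
        rcases hx with hx | hx <;> rcases hy with hy | hy
        · exact Or.inr ⟨n + m, by omega, Or.inl (by rw [hxy, hx, hy, pow_add])⟩
        · -- a^n * b^m
          rcases mixed a b (a * b) rfl hl hr n m hn hm with h | ⟨k, hk, h⟩ | ⟨k, hk, h⟩
          · refine Or.inl ?_
            have : ((x * y : S) : WithOne S) = ((a * b : S) : WithOne S) := by
              rw [hxy, hx, hy, h]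
            exact WithOne.coe_inj.mp this
          · exact Or.inr ⟨k, hk, Or.inl (by rw [hxy, hx, hy, h])⟩
          · exact Or.inr ⟨k, hk, Or.inr (by rw [hxy, hx, hy, h])⟩
        · -- b^n * a^m
          rcases mixed b a (a * b) hba hl hr n m hn hm with h | ⟨k, hk, h⟩ | ⟨k, hk, h⟩
          · refine Or.inl ?_
            have : ((x * y : S) : WithOne S) = ((a * b : S) : WithOne S) := by
              rw [hxy, hx, hy, h]
            exact WithOne.coe_inj.mp this
          · exact Or.inr ⟨k, hk, Or.inr (by rw [hxy, hx, hy, h])⟩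
          · exact Or.inr ⟨k, hk, Or.inl (by rw [hxy, hx, hy, h])⟩
        · exact Or.inr ⟨n + m, by omega, Or.inr (by rw [hxy, hx, hy, pow_add])⟩


end PaperStmt
end
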